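/- arXiv:2504.01713 — 3 statements merged into one kernel-verified Lean document; each statement's English description precedes it below -/
import Mathlib

section
/- Let d ≥ 2 and suppose |S| is odd. Then Alice wins if and only if there exists a point x ∈ S such that every affine hyperplane through x is good; moreover, any such x is a winning point for Alice. -/
open scoped RealInnerProductSpace

/-- `claims S a b` is the number of voters in `S` strictly closer to `a` than to `b`.
Thus `V_A(a,b) = claims S a b` and `V_B(a,b) = claims S b a`. -/
noncomputable def claims {d : ℕ} (S : Finset (EuclideanSpace ℝ (Fin d)))
    (a b : EuclideanSpace ℝ (Fin d)) : ℕ :=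
  (S.filter fun x => dist a x < dist b x).card

/-- `a` is a winning point for Alice: `V_A(a,b) ≥ V_B(a,b)` for every `b`. -/
def IsWinningPoint {d : ℕ} (S : Finset (EuclideanSpace ℝ (Fin d)))
    (a : EuclideanSpace ℝ (Fin d)) : Prop :=
  ∀ b : EuclideanSpace ℝ (Fin d), claims S b a ≤ claims S a b

/-!
If every hyperplane through `x` halves `S`, then `x` wins: for `b ≠ x`, every voter closer to
`b` lies strictly on `b`'s side of the hyperplane through `x` orthogonal to `b - x`, and every
voter strictly on the other side is closer to `x`.

Conversely, let `a` win. Placing `b = a + ε • v` with `ε → 0⁺` shows that no more voters lie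
strictly on the `v` side of the hyperplane `⟪y - a, v⟫ = 0` than on or behind it. For a generic `v`
(no voter other than `a` on that hyperplane), applying this to `±v` and using that `|S|` is odd
forces `a ∈ S` and an exact halving. A hyperplane with an arbitrary normal `c` is tilted to the
generic normal `c + t • w`, `t → 0⁺`, with `w` generic on it: the voters on the hyperplane are
then split according to the sign of `⟪y - a, w⟫`, and comparing `w` with `-w` cancels them.
-/

open Filter Topology Finset

lemma card_filter_or_of_disjoint {α : Type*} (s : Finset α) {p q : α → Prop} [DecidablePred p]
    [DecidablePred q] (h : ∀ x ∈ s, p x → ¬q x) :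
    #{x ∈ s | p x ∨ q x} = #{x ∈ s | p x} + #{x ∈ s | q x} := by
  classical
  rw [filter_or, card_union_of_disjoint (disjoint_filter.2 h)]

lemma exists_forall_inner_ne_zero {E : Type*} [NormedAddCommGroup E] [InnerProductSpace ℝ E]
    (F : Finset E) (hF : 0 ∉ F) : ∃ u : E, ∀ v ∈ F, ⟪v, u⟫ ≠ 0 := by
  obtain ⟨u, hu⟩ := Module.Dual.exists_forall_ne_zero_of_forall_exists
    (fun v : F => innerₛₗ ℝ (v : E))
    fun v => ⟨v, inner_self_ne_zero.2 (ne_of_mem_of_not_mem v.2 hF)⟩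
  exact ⟨u, fun v hv => hu ⟨v, hv⟩⟩

lemma eventually_pos_add_mul_iff (p q : ℝ) :
    ∀ᶠ t in 𝓝[>] 0, (0 < p + t * q ↔ 0 < p ∨ p = 0 ∧ 0 < q) := by
  have hlim : Tendsto (fun t => p + t * q) (𝓝[>] 0) (𝓝 p) := by
    have : Continuous fun t : ℝ => p + t * q := by fun_prop
    simpa using (this.tendsto 0).mono_left nhdsWithin_le_nhds
  rcases lt_trichotomy p 0 with hp | rfl | hp
  · filter_upwards [hlim.eventually (gt_mem_nhds hp)] with t ht
    simp [ht.not_gt, hp.not_gt, hp.ne]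
  · filter_upwards [self_mem_nhdsWithin] with t (ht : 0 < t)
    simp [mul_pos_iff_of_pos_left ht]
  · filter_upwards [hlim.eventually (lt_mem_nhds hp)] with t ht
    simp [ht, hp]

section Distance

variable {E : Type*} [NormedAddCommGroup E] [InnerProductSpace ℝ E]

lemma norm_add_sub_sq (a w y : E) :
    ‖a + w - y‖ ^ 2 = ‖a - y‖ ^ 2 - 2 * ⟪y - a, w⟫ + ‖w‖ ^ 2 := by
  rw [show a + w - y = (a - y) + w by abel, norm_add_sq_real, ← neg_sub y a, inner_neg_left]
  ring

lemma dist_add_lt_dist_iff (a w y : E) :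
    dist (a + w) y < dist a y ↔ ‖w‖ ^ 2 < 2 * ⟪y - a, w⟫ := by
  rw [dist_eq_norm, dist_eq_norm, ← sq_lt_sq₀ (norm_nonneg _) (norm_nonneg _), norm_add_sub_sq]
  constructor <;> intro <;> linarith

lemma dist_lt_dist_add_iff (a w y : E) :
    dist a y < dist (a + w) y ↔ 2 * ⟪y - a, w⟫ < ‖w‖ ^ 2 := by
  rw [dist_eq_norm, dist_eq_norm, ← sq_lt_sq₀ (norm_nonneg _) (norm_nonneg _), norm_add_sub_sq]
  constructor <;> intro <;> linarith

end Distance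

section Winning

variable {d : ℕ} {S : Finset (EuclideanSpace ℝ (Fin d))}

lemma isWinningPoint_of_forall_card_eq {x : EuclideanSpace ℝ (Fin d)}
    (hx : ∀ c, c ≠ 0 → #{y ∈ S | ⟪x, c⟫ < ⟪y, c⟫} = #{y ∈ S | ⟪y, c⟫ < ⟪x, c⟫}) :
    IsWinningPoint S x := by
  intro b
  obtain ⟨w, rfl⟩ : ∃ w, b = x + w := ⟨b - x, by abel⟩
  rcases eq_or_ne w 0 with rfl | hw
  · simp
  have hsq := sq_nonneg ‖w‖
  calc claims S (x + w) x ≤ #{y ∈ S | ⟪x, w⟫ < ⟪y, w⟫} := by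
        refine card_le_card (monotone_filter_right _ fun y _ h => ?_)
        rw [dist_add_lt_dist_iff, inner_sub_left] at h
        linarith
    _ = #{y ∈ S | ⟪y, w⟫ < ⟪x, w⟫} := hx w hw
    _ ≤ claims S x (x + w) := by
        refine card_le_card (monotone_filter_right _ fun y _ h => ?_)
        rw [dist_lt_dist_add_iff, inner_sub_left]
        linarith

variable {a : EuclideanSpace ℝ (Fin d)}

lemma IsWinningPoint.card_pos_le (ha : IsWinningPoint S a) (v : EuclideanSpace ℝ (Fin d)) :
    #{y ∈ S | 0 < ⟪y - a, v⟫} ≤ #{y ∈ S | ⟪y - a, v⟫ ≤ 0} := by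
  rcases eq_or_ne v 0 with rfl | hv
  · simp
  have hv2 : 0 < ‖v‖ ^ 2 := by positivity
  have key : ∀ y ∈ S, ∀ᶠ ε : ℝ in 𝓝[>] 0,
      (dist (a + ε • v) y < dist a y ↔ 0 < ⟪y - a, v⟫) ∧
        (dist a y < dist (a + ε • v) y ↔ ⟪y - a, v⟫ ≤ 0) := fun y _ => by
    filter_upwards [self_mem_nhdsWithin, eventually_pos_add_mul_iff (2 * ⟪y - a, v⟫) (-‖v‖ ^ 2)]
      with ε (hε : 0 < ε) hlex
    have hsmall : 0 < ⟪y - a, v⟫ → ε * ‖v‖ ^ 2 < 2 * ⟪y - a, v⟫ := fun hI => by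
      linarith [hlex.2 (Or.inl (by linarith))]
    have hsq : ‖ε • v‖ ^ 2 = ε ^ 2 * ‖v‖ ^ 2 := by
      rw [norm_smul, mul_pow, Real.norm_eq_abs, sq_abs]
    rw [dist_add_lt_dist_iff, dist_lt_dist_add_iff, hsq, real_inner_smul_right]
    refine ⟨⟨fun h => ?_, fun hI => by nlinarith [hsmall hI]⟩,
      ⟨fun h => ?_, fun hI => by nlinarith [mul_pos (pow_pos hε 2) hv2]⟩⟩
    · by_contra! hI
      nlinarith [mul_pos (pow_pos hε 2) hv2]
    · by_contra! hI
      nlinarith [hsmall hI]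
  obtain ⟨ε, hε⟩ := ((eventually_all_finset S).2 key).exists
  have := ha (a + ε • v)
  rwa [claims, claims, filter_congr fun y hy => (hε y hy).1,
    filter_congr fun y hy => (hε y hy).2] at this

lemma IsWinningPoint.mem_and_card_eq (ha : IsWinningPoint S a) (hodd : Odd #S)
    {v : EuclideanSpace ℝ (Fin d)} (hv : ∀ y ∈ S, y ≠ a → ⟪y - a, v⟫ ≠ 0) :
    a ∈ S ∧ #{y ∈ S | 0 < ⟪y - a, v⟫} = #{y ∈ S | ⟪y - a, v⟫ < 0} := by
  have h₁ := ha.card_pos_le v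
  have h₂ := ha.card_pos_le (-v)
  simp only [inner_neg_right, neg_pos, neg_nonpos] at h₂
  have hle : #{y ∈ S | ⟪y - a, v⟫ ≤ 0} =
      #{y ∈ S | ⟪y - a, v⟫ < 0} + #{y ∈ S | ⟪y - a, v⟫ = 0} := by
    rw [← card_filter_or_of_disjoint S fun y _ h => h.ne]
    simp only [le_iff_lt_or_eq]
  have hge : #{y ∈ S | 0 ≤ ⟪y - a, v⟫} =
      #{y ∈ S | 0 < ⟪y - a, v⟫} + #{y ∈ S | ⟪y - a, v⟫ = 0} := by
    rw [← card_filter_or_of_disjoint S fun y _ h => h.ne']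
    simp only [le_iff_lt_or_eq, eq_comm]
  have htot := card_filter_add_card_filter_not (s := S) fun y => 0 < ⟪y - a, v⟫
  simp only [not_lt] at htot
  have hzero : {y ∈ S | ⟪y - a, v⟫ = 0} ⊆ {a} := fun y hy => by
    rw [mem_filter] at hy
    by_contra hya
    exact hv y hy.1 (by simpa using hya) hy.2
  have hz := card_le_card hzero
  rw [card_singleton] at hz
  obtain ⟨k, hk⟩ := hodd
  -- with `p`, `n`, `z` the numbers of voters with `⟪y - a, v⟫` positive, negative, zero:
  -- `p ≤ n + z`, `n ≤ p + z` and `z ≤ 1` with `p + n + z` odd force `z = 1` and `p = n`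
  refine ⟨?_, by omega⟩
  obtain ⟨y, hy⟩ := card_pos.1 (by omega : 0 < #{y ∈ S | ⟪y - a, v⟫ = 0})
  rw [← mem_singleton.1 (hzero hy)]
  exact (mem_filter.1 hy).1

lemma IsWinningPoint.card_lex_eq (ha : IsWinningPoint S a) (hodd : Odd #S)
    (c w : EuclideanSpace ℝ (Fin d)) (hw : ∀ y ∈ S, y ≠ a → ⟪y - a, c⟫ = 0 → ⟪y - a, w⟫ ≠ 0) :
    #{y ∈ S | 0 < ⟪y - a, c⟫} + #{y ∈ S | ⟪y - a, c⟫ = 0 ∧ 0 < ⟪y - a, w⟫} =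
      #{y ∈ S | ⟪y - a, c⟫ < 0} + #{y ∈ S | ⟪y - a, c⟫ = 0 ∧ ⟪y - a, w⟫ < 0} := by
  have key : ∀ y ∈ S, ∀ᶠ t : ℝ in 𝓝[>] 0,
      (0 < ⟪y - a, c + t • w⟫ ↔ 0 < ⟪y - a, c⟫ ∨ ⟪y - a, c⟫ = 0 ∧ 0 < ⟪y - a, w⟫) ∧
        (⟪y - a, c + t • w⟫ < 0 ↔ ⟪y - a, c⟫ < 0 ∨ ⟪y - a, c⟫ = 0 ∧ ⟪y - a, w⟫ < 0) :=
    fun y _ => by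
      filter_upwards [eventually_pos_add_mul_iff ⟪y - a, c⟫ ⟪y - a, w⟫,
        eventually_pos_add_mul_iff (-⟪y - a, c⟫) (-⟪y - a, w⟫)] with t h₁ h₂
      rw [inner_add_right, real_inner_smul_right, h₁, ← neg_pos, neg_add, ← mul_neg, h₂]
      simp only [neg_pos, neg_eq_zero, true_and]
  obtain ⟨t, ht⟩ := ((eventually_all_finset S).2 key).exists
  have hgen : ∀ y ∈ S, y ≠ a → ⟪y - a, c + t • w⟫ ≠ 0 := by
    intro y hy hya h0
    obtain ⟨hpos, hneg⟩ := ht y hy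
    rw [h0, lt_self_iff_false, false_iff] at hpos hneg
    rcases lt_trichotomy ⟪y - a, c⟫ 0 with hc | hc | hc
    · exact hneg (Or.inl hc)
    · rcases (hw y hy hya hc).lt_or_gt with hw' | hw'
      · exact hneg (Or.inr ⟨hc, hw'⟩)
      · exact hpos (Or.inr ⟨hc, hw'⟩)
    · exact hpos (Or.inl hc)
  have := (ha.mem_and_card_eq hodd hgen).2
  rwa [filter_congr fun y hy => (ht y hy).1, filter_congr fun y hy => (ht y hy).2,
    card_filter_or_of_disjoint S fun y _ h h' => h.ne' h'.1,
    card_filter_or_of_disjoint S fun y _ h h' => h.ne h'.1] at this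

lemma IsWinningPoint.mem (ha : IsWinningPoint S a) (hodd : Odd #S) : a ∈ S := by
  obtain ⟨v, hv⟩ := exists_forall_inner_ne_zero ((S.erase a).image (· - a)) (by simp [sub_eq_zero])
  exact (ha.mem_and_card_eq hodd fun y hy hya =>
    hv _ (mem_image_of_mem _ (mem_erase.2 ⟨hya, hy⟩))).1

lemma IsWinningPoint.card_eq (ha : IsWinningPoint S a) (hodd : Odd #S)
    (c : EuclideanSpace ℝ (Fin d)) :
    #{y ∈ S | ⟪a, c⟫ < ⟪y, c⟫} = #{y ∈ S | ⟪y, c⟫ < ⟪a, c⟫} := by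
  obtain ⟨w, hw⟩ := exists_forall_inner_ne_zero
    ({y ∈ S | y ≠ a ∧ ⟪y - a, c⟫ = 0}.image (· - a)) (by simp [sub_eq_zero])
  have hw' : ∀ y ∈ S, y ≠ a → ⟪y - a, c⟫ = 0 → ⟪y - a, w⟫ ≠ 0 := fun y hy hya hc =>
    hw _ (mem_image_of_mem _ (mem_filter.2 ⟨hy, hya, hc⟩))
  have h₁ := ha.card_lex_eq hodd c w hw'
  have h₂ := ha.card_lex_eq hodd c (-w) fun y hy hya hc => by
    simpa [inner_neg_right] using hw' y hy hya hc
  simp only [inner_neg_right, neg_pos, neg_lt_zero, inner_sub_left, sub_pos, sub_neg]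
    at h₁ h₂
  omega

end Winning

theorem stmt4_general (d : ℕ) (S : Finset (EuclideanSpace ℝ (Fin d)))
    (hodd : Odd S.card) :
    ((∃ a, IsWinningPoint S a) ↔
      ∃ x ∈ S, ∀ (c : EuclideanSpace ℝ (Fin d)) (lam : ℝ), c ≠ 0 → ⟪x, c⟫ = lam →
        (S.filter fun y => lam < ⟪y, c⟫).card = (S.filter fun y => ⟪y, c⟫ < lam).card) ∧
    (∀ x ∈ S,
      (∀ (c : EuclideanSpace ℝ (Fin d)) (lam : ℝ), c ≠ 0 → ⟪x, c⟫ = lam →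
        (S.filter fun y => lam < ⟪y, c⟫).card = (S.filter fun y => ⟪y, c⟫ < lam).card) →
      IsWinningPoint S x) := by
  have of_good : ∀ x, (∀ (c : EuclideanSpace ℝ (Fin d)) (lam : ℝ), c ≠ 0 → ⟪x, c⟫ = lam →
      #{y ∈ S | lam < ⟪y, c⟫} = #{y ∈ S | ⟪y, c⟫ < lam}) → IsWinningPoint S x :=
    fun x hx => isWinningPoint_of_forall_card_eq fun c hc => hx c _ hc rfl
  refine ⟨⟨fun ⟨a, ha⟩ => ⟨a, ha.mem hodd, ?_⟩, fun ⟨x, _, hx⟩ => ⟨x, of_good x hx⟩⟩,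
    fun x _ => of_good x⟩
  rintro c _ - rfl
  exact ha.card_eq hodd c

/-- for `d ≥ 2` and `|S|` odd, Alice wins iff there is `x ∈ S` such that every
affine hyperplane through `x` is good (equal numbers of points of `S` on its two open sides);
moreover any such `x` is a winning point. -/
theorem stmt4 (d : ℕ) (hd : 2 ≤ d) (S : Finset (EuclideanSpace ℝ (Fin d)))
    (hodd : Odd S.card) :
    ((∃ a, IsWinningPoint S a) ↔
      ∃ x ∈ S, ∀ (c : EuclideanSpace ℝ (Fin d)) (lam : ℝ), c ≠ 0 → ⟪x, c⟫ = lam →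
        (S.filter fun y => lam < ⟪y, c⟫).card = (S.filter fun y => ⟪y, c⟫ < lam).card) ∧
    (∀ x ∈ S,
      (∀ (c : EuclideanSpace ℝ (Fin d)) (lam : ℝ), c ≠ 0 → ⟪x, c⟫ = lam →
        (S.filter fun y => lam < ⟪y, c⟫).card = (S.filter fun y => ⟪y, c⟫ < lam).card) →
      IsWinningPoint S x) :=
  stmt4_general d S hodd
end

section
/- Let n ≥ 3 and suppose either d = 2 and n is odd, or d ≥ 3. Let M = {(x₁,…,xₙ) ∈ (ℝ^d)ⁿ : the xᵢ are pairwise distinct}, equipped with the subspace topology from (ℝ^d)ⁿ, and let A = {(x₁,…,xₙ) ∈ M : Alice wins for the voter set S = {x₁,…,xₙ}}. Then A is nowhere dense in M. -/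
open scoped RealInnerProductSpace

/-!
A winning point `a` is a halving point: every open half-space bounded by a hyperplane through `a`
contains at most half of the voters, since otherwise Bob wins by a small step from `a` into that
half-space. Tilting a hyperplane through `a` slightly in both directions refines this: for every
flat `F` through `a` and every `w`, twice the number of voters in `F` strictly on the positive side
of `w`, plus the parity of `n`, is at most the number of voters in `F`.

If no three voters are collinear and `n` is odd, the flat `{a}` shows that `a` is a voter, and the
line through `a` and a second voter contains only these two, one of them on the positive side.
If no four voters are coplanar and `n ≥ 4`, some voter `y` lies off the line through `a` and a
voter `x ≠ a`; the plane through `a`, `x`, `y` contains at most three voters, two of which lie on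
the positive side of the bisector of the angle at `a`. Both general-position conditions are open
and dense for `d ≥ 2`, resp. `d ≥ 3`, on the space of configurations.
-/

open Finset Function Module Filter Topology

theorem eventually_pos_add_mul {b c : ℝ} (h : 0 < c ∨ c = 0 ∧ 0 < b) :
    ∀ᶠ t in 𝓝[>] (0 : ℝ), 0 < c + t * b := by
  rcases h with hc | ⟨rfl, hb⟩
  · exact nhdsWithin_le_nhds <| continuousAt_const.eventually_lt
      (continuous_const.add (continuous_id.mul continuous_const)).continuousAt (by simpa using hc)
  · filter_upwards [self_mem_nhdsWithin] with t (ht : 0 < t)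
    positivity

section GeneralPosition

variable {ι E : Type*} [AddCommGroup E] [Module ℝ E]

def InGeneralPosition (k : ℕ) (x : ι → E) : Prop :=
  ∀ s : Finset ι, #s = k → AffineIndependent ℝ fun i : s => x i

open scoped Classical in
theorem InGeneralPosition.card_filter_mem_le [Fintype ι] [FiniteDimensional ℝ E] {k : ℕ}
    {x : ι → E} (hx : InGeneralPosition (k + 2) x) (F : AffineSubspace ℝ E)
    (hF : finrank ℝ F.direction ≤ k) : #{i | x i ∈ F} ≤ k + 1 := by
  by_contra! hcard
  obtain ⟨s, hsF, hs⟩ := exists_subset_card_eq (show k + 2 ≤ #{i | x i ∈ F} by omega)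
  have hspan := (hx s hs).finrank_vectorSpan (n := k + 1) (by simpa using hs)
  have hle : vectorSpan ℝ (Set.range fun i : s => x i) ≤ F.direction :=
    vectorSpan_mono ℝ <| Set.range_subset_iff.2 fun i => (mem_filter.1 (hsF i.2)).2
  have := Submodule.finrank_mono hle
  omega

end GeneralPosition

section InnerProductSpace

variable {E : Type*} [NormedAddCommGroup E] [InnerProductSpace ℝ E]

theorem eventually_dist_add_smul_lt {a y v : E} (h : 0 < ⟪y - a, v⟫) :
    ∀ᶠ t in 𝓝[>] (0 : ℝ), dist (a + t • v) y < dist a y := by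
  have hsmall : ∀ᶠ t in 𝓝 (0 : ℝ), t * ‖v‖ ^ 2 < 2 * ⟪y - a, v⟫ :=
    (continuous_id.mul continuous_const).continuousAt.eventually_lt continuousAt_const
      (by simpa using h)
  filter_upwards [nhdsWithin_le_nhds hsmall, self_mem_nhdsWithin] with t ht (htpos : 0 < t)
  refine lt_of_pow_lt_pow_left₀ 2 dist_nonneg ?_
  have hexp : dist (a + t • v) y ^ 2 = dist a y ^ 2 - t * (2 * ⟪y - a, v⟫ - t * ‖v‖ ^ 2) := by
    rw [dist_eq_norm, dist_eq_norm, show a + t • v - y = (a - y) + t • v by abel,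
      norm_add_sq_real, inner_smul_right, norm_smul, Real.norm_eq_abs, mul_pow, sq_abs,
      ← neg_sub y a, inner_neg_left]
    ring
  rw [hexp]
  nlinarith

theorem exists_inner_pos_inner_pos {v₁ v₂ : E} (h₁ : v₁ ≠ 0) (h₂ : v₂ ∉ ℝ ∙ v₁) :
    ∃ w : E, 0 < ⟪v₁, w⟫ ∧ 0 < ⟪v₂, w⟫ := by
  have hv₂ : v₂ ≠ 0 := fun h => h₂ (h ▸ Submodule.zero_mem _)
  have hw : ‖v₂‖ • v₁ + ‖v₁‖ • v₂ ≠ 0 := by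
    intro hw
    refine h₂ (Submodule.mem_span_singleton.2 ⟨-(‖v₂‖ / ‖v₁‖), ?_⟩)
    rw [neg_smul, div_eq_inv_mul, mul_smul, eq_neg_of_add_eq_zero_left hw, smul_neg, neg_neg,
      smul_smul, inv_mul_cancel₀ (norm_ne_zero_iff.2 h₁), one_smul]
  have hcs₁ : -⟪v₁, v₂⟫ < ‖v₁‖ * ‖v₂‖ := by
    simpa [inner_neg_right] using (inner_lt_norm_mul_iff_real (x := v₁) (y := -v₂)).2
      (by simpa [← add_eq_zero_iff_eq_neg])
  have hcs₂ : -⟪v₂, v₁⟫ < ‖v₂‖ * ‖v₁‖ := by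
    rw [real_inner_comm, mul_comm]
    exact hcs₁
  refine ⟨‖v₂‖ • v₁ + ‖v₁‖ • v₂, ?_, ?_⟩
  · rw [inner_add_right, inner_smul_right, inner_smul_right, real_inner_self_eq_norm_sq]
    have := norm_pos_iff.2 h₁
    nlinarith
  · rw [inner_add_right, inner_smul_right, inner_smul_right, real_inner_self_eq_norm_sq]
    have := norm_pos_iff.2 hv₂
    nlinarith

theorem exists_inner_eq_zero_iff_mem [FiniteDimensional ℝ E] {ι : Type*} [Finite ι]
    (K : Submodule ℝ E) (v : ι → E) : ∃ u : E, ∀ i, ⟪v i, u⟫ = 0 ↔ v i ∈ K := by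
  classical
  have := Fintype.ofFinite ι
  let p : {i // v i ∉ K} → Submodule ℝ Kᗮ := fun i =>
    LinearMap.ker ((innerₛₗ ℝ (v i)).comp Kᗮ.subtype)
  have hp : ∀ i, p i ≠ ⊤ := by
    rintro ⟨i, hi⟩ htop
    refine hi (K.orthogonal_orthogonal ▸ ?_)
    rw [Submodule.mem_orthogonal']
    intro u hu
    simpa using LinearMap.congr_fun (LinearMap.ker_eq_top.1 htop) ⟨u, hu⟩
  obtain ⟨⟨u, huK⟩, -, hu⟩ := Set.exists_of_ssubset
    (Submodule.iUnion_ssubset_of_forall_ne_top_of_card_lt univ p hp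
      (by rw [ENat.card_eq_top_of_infinite]; exact ENat.natCast_lt_top _))
  refine ⟨u, fun i => ⟨fun h => ?_, fun h => (K.mem_orthogonal u).1 huK _ h⟩⟩
  by_contra hi
  exact hu (Set.mem_biUnion (mem_univ ⟨i, hi⟩) (by simpa [p] using h))

end InnerProductSpace

section HalvingPoint

variable {ι E : Type*} [Fintype ι] [NormedAddCommGroup E] [InnerProductSpace ℝ E]
  {x : ι → E} {a : E}

def IsHalvingPoint (x : ι → E) (a : E) : Prop :=
  ∀ v : E, 2 * #{i | 0 < ⟪x i - a, v⟫} ≤ Fintype.card ι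

theorem IsHalvingPoint.two_mul_card_lex_pos_le (h : IsHalvingPoint x a) (u w : E) :
    2 * #{i | 0 < ⟪x i - a, u⟫ ∨ ⟪x i - a, u⟫ = 0 ∧ 0 < ⟪x i - a, w⟫} ≤ Fintype.card ι := by
  -- for small `t > 0`, all these points lie strictly on the positive side of `u + t • w`
  obtain ⟨t, ht⟩ := (eventually_all.2 fun i => eventually_imp_distrib_left.2
    (eventually_pos_add_mul (b := ⟪x i - a, w⟫) (c := ⟪x i - a, u⟫))).exists
  refine le_trans ?_ (h (u + t • w))
  gcongr with i
  simpa [inner_add_right, inner_smul_right, mul_comm] using ht i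

variable [FiniteDimensional ℝ E]

open scoped Classical in
/-- Tilt a hyperplane through `a` that meets the points exactly in `F` slightly towards `w`, from
either side. -/
theorem IsHalvingPoint.two_mul_card_pos_add_mod_two_le (h : IsHalvingPoint x a)
    {F : AffineSubspace ℝ E} (haF : a ∈ F) (w : E) :
    2 * #{i | x i ∈ F ∧ 0 < ⟪x i - a, w⟫} + Fintype.card ι % 2 ≤ #{i | x i ∈ F} := by
  obtain ⟨u, hu⟩ := exists_inner_eq_zero_iff_mem F.direction fun i => x i - a
  have huF (i : ι) : ⟪x i - a, u⟫ = 0 ↔ x i ∈ F :=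
    (hu i).trans (F.vsub_right_mem_direction_iff_mem haF _)
  have h₁ := h.two_mul_card_lex_pos_le u w
  have h₂ := h.two_mul_card_lex_pos_le (-u) w
  have hcount : #{i | 0 < ⟪x i - a, u⟫ ∨ ⟪x i - a, u⟫ = 0 ∧ 0 < ⟪x i - a, w⟫}
      + #{i | 0 < ⟪x i - a, -u⟫ ∨ ⟪x i - a, -u⟫ = 0 ∧ 0 < ⟪x i - a, w⟫} + #{i | x i ∈ F}
      = Fintype.card ι + 2 * #{i | x i ∈ F ∧ 0 < ⟪x i - a, w⟫} := by
    simp only [card_filter, Fintype.card_eq_sum_ones, mul_sum, ← sum_add_distrib]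
    refine sum_congr rfl fun i _ => ?_
    simp only [inner_neg_right, neg_pos, neg_eq_zero, ← huF i]
    split_ifs <;> grind
  omega

open scoped Classical in
theorem IsHalvingPoint.even_card (h : IsHalvingPoint x a) (hinj : Injective x)
    (hx : InGeneralPosition 3 x) (hcard : 2 ≤ Fintype.card ι) : Even (Fintype.card ι) := by
  by_contra hodd
  have hmod : Fintype.card ι % 2 = 1 := Nat.odd_iff.1 (Nat.not_even_iff_odd.1 hodd)
  obtain ⟨i₀, rfl⟩ : ∃ i₀, x i₀ = a := by
    have := h.two_mul_card_pos_add_mod_two_le (mem_affineSpan ℝ (Set.mem_singleton a)) 0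
    obtain ⟨i, hi⟩ := card_pos.1 (by omega : 0 < #{i | x i ∈ affineSpan ℝ {a}})
    exact ⟨i, (AffineSubspace.mem_affineSpan_singleton ..).1 (mem_filter.1 hi).2⟩
  obtain ⟨i₁, hi₁⟩ := Fintype.exists_ne_of_one_lt_card hcard i₀
  have hL : #{i | x i ∈ line[ℝ, x i₀, x i₁]} ≤ 2 := hx.card_filter_mem_le (k := 1) _ <| by
    rw [direction_affineSpan]
    exact (collinear_pair ℝ _ _).finrank_le_one
  have hpos : 0 < #{i | x i ∈ line[ℝ, x i₀, x i₁] ∧ 0 < ⟪x i - x i₀, x i₁ - x i₀⟫} :=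
    card_pos.2 ⟨i₁, mem_filter.2 ⟨mem_univ _, right_mem_affineSpan_pair ..,
      real_inner_self_pos.2 (sub_ne_zero.2 (hinj.ne hi₁))⟩⟩
  have := h.two_mul_card_pos_add_mod_two_le (left_mem_affineSpan_pair ℝ (x i₀) (x i₁))
    (x i₁ - x i₀)
  omega

open scoped Classical in
theorem IsHalvingPoint.card_lt_four (h : IsHalvingPoint x a) (hinj : Injective x)
    (hx : InGeneralPosition 4 x) : Fintype.card ι < 4 := by
  by_contra! hcard
  obtain ⟨i₁, hi₁⟩ : ∃ i₁, x i₁ ≠ a := by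
    obtain ⟨i, j, hij⟩ := Fintype.exists_pair_of_one_lt_card (by omega : 1 < Fintype.card ι)
    by_cases hi : x i = a
    · exact ⟨j, fun hj => hij (hinj (hi.trans hj.symm))⟩
    · exact ⟨i, hi⟩
  obtain ⟨i₂, hi₂⟩ : ∃ i₂, x i₂ ∉ line[ℝ, a, x i₁] := by
    have hL : #{i | x i ∈ line[ℝ, a, x i₁]} ≤ 3 := hx.card_filter_mem_le (k := 2) _ <| by
      rw [direction_affineSpan]
      exact (collinear_pair ℝ _ _).finrank_le_one.trans (by norm_num)
    by_contra! hall
    rw [filter_true_of_mem fun i _ => hall i, card_univ] at hL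
    omega
  have hv₂ : x i₂ - a ∉ ℝ ∙ (x i₁ - a) := fun hmem => hi₂ <| by
    have := (vadd_left_mem_affineSpan_pair (k := ℝ) (p₁ := a) (p₂ := x i₁)).2
      (Submodule.mem_span_singleton.1 hmem)
    rwa [vadd_eq_add, sub_add_cancel] at this
  obtain ⟨w, hw₁, hw₂⟩ :=
    exists_inner_pos_inner_pos (v₁ := x i₁ - a) (v₂ := x i₂ - a) (sub_ne_zero.2 hi₁) hv₂
  have hP : #{i | x i ∈ affineSpan ℝ {a, x i₁, x i₂}} ≤ 3 := hx.card_filter_mem_le (k := 2) _ <| by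
    rw [direction_affineSpan]
    exact (coplanar_triple ℝ _ _ _).finrank_le_two
  have hne : i₁ ≠ i₂ := by
    rintro rfl
    exact hi₂ (right_mem_affineSpan_pair ..)
  have hpair : {i₁, i₂} ⊆
      ({i | x i ∈ affineSpan ℝ {a, x i₁, x i₂} ∧ 0 < ⟪x i - a, w⟫} : Finset ι) := by
    intro i hi
    rcases mem_insert.1 hi with rfl | hi
    · exact mem_filter.2 ⟨mem_univ _, mem_affineSpan ℝ (by simp), hw₁⟩
    · rw [mem_singleton.1 hi]
      exact mem_filter.2 ⟨mem_univ _, mem_affineSpan ℝ (by simp), hw₂⟩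
  have h2 := card_le_card hpair
  rw [card_pair hne] at h2
  have := h.two_mul_card_pos_add_mod_two_le (F := affineSpan ℝ {a, x i₁, x i₂})
    (mem_affineSpan ℝ (by simp)) w
  omega

end HalvingPoint

section Voting

variable {ι : Type*} [Fintype ι] {d : ℕ} [DecidableEq (EuclideanSpace ℝ (Fin d))]
  {x : ι → EuclideanSpace ℝ (Fin d)}

theorem claims_image (hx : Injective x) (p q : EuclideanSpace ℝ (Fin d)) :
    claims (univ.image x) p q = #{i | dist p (x i) < dist q (x i)} := by
  rw [claims, filter_image, card_image_of_injective _ hx]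

theorem IsWinningPoint.isHalvingPoint {a : EuclideanSpace ℝ (Fin d)} (hx : Injective x)
    (h : IsWinningPoint (univ.image x) a) : IsHalvingPoint x a := by
  intro v
  obtain ⟨t, ht⟩ := (eventually_all.2 fun i =>
    eventually_imp_distrib_left.2 (eventually_dist_add_smul_lt (y := x i) (v := v))).exists
  have hwin := h (a + t • v)
  rw [claims_image hx, claims_image hx] at hwin
  have hcloser : #{i | 0 < ⟪x i - a, v⟫} ≤ #{i | dist (a + t • v) (x i) < dist a (x i)} :=
    card_le_card fun i hi => by simpa using ht i (by simpa using hi)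
  have hfarther : #{i | dist a (x i) < dist (a + t • v) (x i)} ≤ #{i | ¬ 0 < ⟪x i - a, v⟫} :=
    card_le_card fun i hi => by
      simp only [mem_filter, mem_univ, true_and] at hi ⊢
      exact fun hpos => (ht i hpos).not_gt hi
  have := card_filter_add_card_filter_not (s := univ) fun i => 0 < ⟪x i - a, v⟫
  rw [card_univ] at this
  omega

end Voting

section Density

variable {E F : Type*} [NormedAddCommGroup E] [NormedSpace ℝ E]

theorem Dense.preimage_linearMap [FiniteDimensional ℝ E] [NormedAddCommGroup F] [NormedSpace ℝ F]
    [FiniteDimensional ℝ F] {s : Set F} (hs : Dense s) (f : E →ₗ[ℝ] F)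
    (hf : Surjective f) : Dense (f ⁻¹' s) :=
  hs.preimage (f.toContinuousLinearMap.isOpenMap hf)

theorem Submodule.dense_compl_of_ne_top {K : Submodule ℝ E} (hK : K ≠ ⊤) : Dense (K : Set E)ᶜ :=
  interior_eq_empty_iff_dense_compl.1 <|
    Set.not_nonempty_iff_eq_empty.1 fun h => hK (K.eq_top_of_nonempty_interior' h)

theorem dense_setOf_linearIndependent_fin {m : ℕ} (hm : m ≤ finrank ℝ E) :
    Dense {v : Fin m → E | LinearIndependent ℝ v} := by
  induction m with
  | zero => simp
  | succ m ih =>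
    rw [Metric.dense_iff]
    intro v r hr
    obtain ⟨w, hw, hvw⟩ := (ih (by omega)).exists_dist_lt (Fin.tail v) hr
    have hspan : Submodule.span ℝ (Set.range w) ≠ ⊤ := fun htop => by
      have := finrank_span_eq_card hw
      rw [htop, finrank_top, Fintype.card_fin] at this
      omega
    obtain ⟨e, he, hve⟩ := (Submodule.dense_compl_of_ne_top hspan).exists_dist_lt (v 0) hr
    refine ⟨Fin.cons e w, ?_, linearIndependent_finCons.2 ⟨hw, he⟩⟩
    rw [Metric.mem_ball, dist_comm, dist_pi_lt_iff hr]
    intro i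
    cases i using Fin.cases with
    | zero => simpa using hve
    | succ i => simpa [Fin.tail] using (dist_pi_lt_iff hr).1 hvw i

variable [FiniteDimensional ℝ E]

theorem dense_setOf_linearIndependent {κ : Type*} [Fintype κ] (h : Fintype.card κ ≤ finrank ℝ E) :
    Dense {v : κ → E | LinearIndependent ℝ v} := by
  let e := Fintype.equivFin κ
  have hset : {v : κ → E | LinearIndependent ℝ v}
      = LinearMap.funLeft ℝ E e.symm ⁻¹' {w | LinearIndependent ℝ w} := by
    ext v
    exact (linearIndependent_equiv (R := ℝ) e.symm).symm
  rw [hset]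
  exact (dense_setOf_linearIndependent_fin h).preimage_linearMap _
    (LinearMap.funLeft_surjective_of_injective _ _ _ e.symm.injective)

theorem dense_setOf_affineIndependent {κ : Type*} [Fintype κ]
    (h : Fintype.card κ ≤ finrank ℝ E + 1) : Dense {p : κ → E | AffineIndependent ℝ p} := by
  classical
  rcases isEmpty_or_nonempty κ with hκ | ⟨⟨i₀⟩⟩
  · simp [affineIndependent_of_subsingleton]
  let f : (κ → E) →ₗ[ℝ] ({i // i ≠ i₀} → E) :=
    LinearMap.pi fun i => LinearMap.proj (R := ℝ) (φ := fun _ => E) i.1 - LinearMap.proj i₀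
  have hf : Surjective f := fun q =>
    ⟨fun i => if h : i = i₀ then 0 else q ⟨i, h⟩, by ext i; simp [f, i.2]⟩
  have hset : {p : κ → E | AffineIndependent ℝ p} = f ⁻¹' {v | LinearIndependent ℝ v} := by
    ext p
    exact affineIndependent_iff_linearIndependent_vsub ℝ p i₀
  rw [hset]
  exact (dense_setOf_linearIndependent (by simp; omega)).preimage_linearMap f hf

end Density

section Topology

variable {ι : Type*} [Finite ι]

theorem isOpen_setOf_injective {X : Type*} [TopologicalSpace X] [T2Space X] :
    IsOpen {x : ι → X | Injective x} := by
  simp only [Function.Injective, Set.ofPred_forall]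
  refine isOpen_iInter_of_finite fun i => isOpen_iInter_of_finite fun j => ?_
  by_cases hij : i = j
  · simp [hij]
  · simpa [hij] using isOpen_ne_fun (continuous_apply i) (continuous_apply j)

variable {E : Type*} [NormedAddCommGroup E] [NormedSpace ℝ E]

theorem isOpen_setOf_affineIndependent_restrict (s : Finset ι) :
    IsOpen {x : ι → E | AffineIndependent ℝ fun i : s => x i} :=
  (isOpen_setOfPred_affineIndependent (𝕜 := ℝ) (E := E) (ι := s)).preimage
    (f := fun (x : ι → E) (i : s) => x i) (by fun_prop)

theorem isOpen_setOf_inGeneralPosition (k : ℕ) : IsOpen {x : ι → E | InGeneralPosition k x} := by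
  simp only [InGeneralPosition, Set.ofPred_forall]
  exact isOpen_iInter_of_finite fun s => isOpen_iInter_of_finite fun _ =>
    isOpen_setOf_affineIndependent_restrict s

theorem dense_setOf_inGeneralPosition [FiniteDimensional ℝ E] {k : ℕ}
    (hk : k ≤ finrank ℝ E + 1) : Dense {x : ι → E | InGeneralPosition k x} := by
  have := Fintype.ofFinite ι
  simp only [InGeneralPosition, Set.ofPred_forall]
  refine dense_iInter_of_isOpen
    (fun s => isOpen_iInter_of_finite fun _ => isOpen_setOf_affineIndependent_restrict s)
    fun s => dense_iInter_of_isOpen (fun _ => isOpen_setOf_affineIndependent_restrict s)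
      fun hs => ?_
  exact (dense_setOf_affineIndependent (κ := s) (E := E) (by simpa [hs] using hk))
    |>.preimage_linearMap (LinearMap.funLeft ℝ E Subtype.val)
      (LinearMap.funLeft_surjective_of_injective _ _ _ Subtype.val_injective)

end Topology

theorem Dense.isNowhereDense_compl_preimage_val {X : Type*} [TopologicalSpace X] {U G : Set X}
    (hGd : Dense G) (hG : IsOpen G) (hU : IsOpen U) :
    IsNowhereDense ((Subtype.val : U → X) ⁻¹' G)ᶜ :=
  (isClosed_isNowhereDense_iff_compl.2
    ⟨by rw [compl_compl]; exact hG.preimage continuous_subtype_val,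
      by rw [compl_compl]; exact hGd.preimage hU.isOpenMap_subtype_val⟩).2

open scoped Classical in
theorem isNowhereDense_setOf_exists_isWinningPoint {d n k : ℕ} (hk : k ≤ d + 1)
    (hnot : ∀ x : Fin n → EuclideanSpace ℝ (Fin d), Injective x → ∀ a, IsHalvingPoint x a →
      ¬InGeneralPosition k x) :
    IsNowhereDense
      {x : {f : Fin n → EuclideanSpace ℝ (Fin d) // Function.Injective f} |
        ∃ a, IsWinningPoint (Finset.image x.1 Finset.univ) a} := by
  have hdense := dense_setOf_inGeneralPosition (ι := Fin n) (E := EuclideanSpace ℝ (Fin d))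
    (k := k) (by rwa [finrank_euclideanSpace_fin])
  refine (hdense.isNowhereDense_compl_preimage_val (isOpen_setOf_inGeneralPosition k)
    isOpen_setOf_injective).mono ?_
  rintro ⟨x, hinj⟩ ⟨a, ha⟩
  exact hnot x hinj a (ha.isHalvingPoint hinj)

open scoped Classical in
theorem stmt16_general (d n : ℕ) (hn : 3 ≤ n)
    (hcase : (d = 2 ∧ Odd n) ∨ 3 ≤ d) :
    IsNowhereDense
      {x : {f : Fin n → EuclideanSpace ℝ (Fin d) // Function.Injective f} |
        ∃ a, IsWinningPoint (Finset.image x.1 Finset.univ) a} := by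
  rcases Nat.even_or_odd n with heven | hodd
  · have hd : 3 ≤ d := hcase.resolve_left fun h => Nat.not_odd_iff_even.2 heven h.2
    refine isNowhereDense_setOf_exists_isWinningPoint (k := 4) (by omega) fun x hinj a ha hx => ?_
    have := ha.card_lt_four hinj hx
    rw [Fintype.card_fin] at this
    obtain ⟨m, rfl⟩ := heven
    omega
  · refine isNowhereDense_setOf_exists_isWinningPoint (k := 3) (by omega) fun x hinj a ha hx => ?_
    have := ha.even_card hinj hx (by rw [Fintype.card_fin]; omega)
    rw [Fintype.card_fin] at this
    exact Nat.not_even_iff_odd.2 hodd this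

open scoped Classical in
/-- for `n ≥ 3`, and either `d = 2` with `n` odd or `d ≥ 3`, the set of
injective `n`-tuples of points of `ℝ^d` whose underlying voter set is an Alice win is
nowhere dense in the space `M` of injective `n`-tuples (with its subspace topology). -/
theorem stmt16 (d n : ℕ) (hd : 1 ≤ d) (hn : 3 ≤ n)
    (hcase : (d = 2 ∧ Odd n) ∨ 3 ≤ d) :
    IsNowhereDense
      {x : {f : Fin n → EuclideanSpace ℝ (Fin d) // Function.Injective f} |
        ∃ a, IsWinningPoint (Finset.image x.1 Finset.univ) a} :=
  stmt16_general d n hn hcase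
end

section
/- Every set S of four distinct points in ℝ² is a win for Alice: there exists a winning point for Alice. -/
open scoped RealInnerProductSpace

/-! A Radon point `a` of the four voters lies in the convex hulls of both parts `A`, `S \ A` of a
partition of `S`. For `b ≠ a`, the voters weakly closer to `b` form a closed half-plane missing `a`,
so it contains neither all of `A` nor all of `S \ A`: at least two voters strictly prefer `a`,
which leaves at most two for `b`. -/

theorem Finset.exists_radon_partition {𝕜 E : Type*} [Field 𝕜]
    [LinearOrder 𝕜] [IsStrictOrderedRing 𝕜] [AddCommGroup E] [Module 𝕜 E]
    [FiniteDimensional 𝕜 E] (S : Finset E) (hS : Module.finrank 𝕜 E + 2 ≤ S.card) :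
    ∃ A ⊆ (S : Set E), (convexHull 𝕜 A ∩ convexHull 𝕜 (↑S \ A)).Nonempty := by
  have hdep : ¬AffineIndependent 𝕜 ((↑) : S → E) := fun hind => by
    have := hind.card_le_finrank_succ
    have := Submodule.finrank_le (vectorSpan 𝕜 (Set.range ((↑) : S → E)))
    simp only [Fintype.card_coe] at *
    omega
  obtain ⟨I, hI⟩ := Convex.radon_partition hdep
  refine ⟨(↑) '' I, Subtype.coe_image_subset _ _, ?_⟩
  rwa [Set.image_compl_eq_range_sdiff_image Subtype.val_injective, Subtype.range_coe] at hI

section InnerProductSpace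

variable {E : Type*} [NormedAddCommGroup E] [InnerProductSpace ℝ E]

theorem convex_setOf_dist_le_dist (b p : E) : Convex ℝ {x : E | dist b x ≤ dist p x} := by
  have hset : {x : E | dist b x ≤ dist p x} =
      {x | ⟪p - b, x⟫ ≤ (‖p‖ ^ 2 - ‖b‖ ^ 2) / 2} := by
    ext x
    simp only [Set.mem_ofPred_eq, dist_eq_norm, ← sq_le_sq₀ (norm_nonneg _) (norm_nonneg _),
      norm_sub_sq_real, inner_sub_left]
    constructor <;> intro h <;> linarith
  rw [hset]
  exact convex_halfSpace_le (innerₛₗ ℝ (p - b)).isLinear _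

theorem exists_dist_lt_dist_of_mem_convexHull {A : Set E} {a b : E} (ha : a ∈ convexHull ℝ A)
    (hb : b ≠ a) : ∃ x ∈ A, dist a x < dist b x := by
  by_contra! h
  have hba : dist b a ≤ dist a a := convexHull_min h (convex_setOf_dist_le_dist b a) ha
  exact hb (by simpa using hba)

end InnerProductSpace

section Claims

variable {d : ℕ}

theorem claims_add_claims_le_card (S : Finset (EuclideanSpace ℝ (Fin d)))
    (a b : EuclideanSpace ℝ (Fin d)) : claims S a b + claims S b a ≤ S.card := by
  rw [claims, claims, ← Finset.card_union_of_disjoint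
    (Finset.disjoint_filter.2 fun _ _ h => h.not_gt)]
  exact Finset.card_le_card (Finset.union_subset (Finset.filter_subset _ _)
    (Finset.filter_subset _ _))

theorem two_le_claims_of_mem_convexHull_inter {S : Finset (EuclideanSpace ℝ (Fin d))}
    {A : Set (EuclideanSpace ℝ (Fin d))} (hAS : A ⊆ S) {a b : EuclideanSpace ℝ (Fin d)}
    (ha : a ∈ convexHull ℝ A ∩ convexHull ℝ (↑S \ A)) (hb : b ≠ a) : 2 ≤ claims S a b := by
  obtain ⟨x, hxA, hx⟩ := exists_dist_lt_dist_of_mem_convexHull ha.1 hb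
  obtain ⟨y, ⟨hyS, hyA⟩, hy⟩ := exists_dist_lt_dist_of_mem_convexHull ha.2 hb
  refine Finset.one_lt_card.2 ⟨x, ?_, y, ?_, fun hxy => hyA (hxy ▸ hxA)⟩
  · exact Finset.mem_filter.2 ⟨hAS hxA, hx⟩
  · exact Finset.mem_filter.2 ⟨hyS, hy⟩

theorem isWinningPoint_of_mem_convexHull_inter {S : Finset (EuclideanSpace ℝ (Fin d))}
    (hS : S.card ≤ 4) {A : Set (EuclideanSpace ℝ (Fin d))} (hAS : A ⊆ S)
    {a : EuclideanSpace ℝ (Fin d)}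
    (ha : a ∈ convexHull ℝ A ∩ convexHull ℝ (↑S \ A)) : IsWinningPoint S a := by
  intro b
  rcases eq_or_ne b a with rfl | hb
  · exact le_rfl
  · have h₂ := two_le_claims_of_mem_convexHull_inter hAS ha hb
    have hsum := claims_add_claims_le_card S a b
    omega

end Claims

/-- every set of four distinct points in `ℝ²` is a win for Alice. -/
theorem stmt17 (S : Finset (EuclideanSpace ℝ (Fin 2))) (hcard : S.card = 4) :
    ∃ a : EuclideanSpace ℝ (Fin 2), IsWinningPoint S a := by
  obtain ⟨A, hAS, a, ha⟩ := Finset.exists_radon_partition (𝕜 := ℝ) S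
    (by rw [finrank_euclideanSpace_fin, hcard])
  exact ⟨a, isWinningPoint_of_mem_convexHull_inter hcard.le hAS ha⟩
end
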